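/- Let n ≥ 2 and m ≥ 2 be integers, let 1 ≤ i < j ≤ m, and let f ∈ R_m = ℤ[x_1, ..., x_m] have odd constant term c_f(1). Then the integer c_{f^{2^n}}(x_i x_j)/2^n + c_{f^{2^n}}(x_i^{2^{n−1}} x_j^{2^{n−1}})/2 is even. -/

import Mathlib

/-!
Write `c, a, b, d` for the coefficients of `1, x_i, x_j, x_i x_j` in `f`. These coefficients are
constant terms of partial derivatives, so the Leibniz rule gives
`c_{f^N}(x_i x_j) = N c^{N-1} d + N (N-1) c^{N-2} a b`; for `N = 2^n` the first summand is
`c^{N-1} d + (N-1) c^{N-2} a b`. For the second, Frobenius gives `f^{2^{n-1}} ≡ expand_{2^{n-1}} f`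
mod 2, hence `f^{2^n} ≡ expand_{2^{n-1}} (f^2)` mod 4, and the coefficient of
`x_i^{2^{n-1}} x_j^{2^{n-1}}` is `≡ c_{f^2}(x_i x_j) = 2 (c d + a b)` mod 4. Modulo 2 the sum is
`d + a b + c d + a b ≡ (1 + c) d ≡ 0`.
-/

open Finsupp

namespace MvPolynomial

variable {σ : Type*}

section Frobenius

variable (p : ℕ) [Fact p.Prime]

theorem expand_pow_zmod (k : ℕ) (f : MvPolynomial σ (ZMod p)) :
    expand (p ^ k) f = f ^ p ^ k := by
  induction k with
  | zero => simp
  | succ k ih => rw [pow_succ', expand_mul, ih, map_pow, expand_zmod, ← pow_mul, ← pow_succ']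

theorem C_dvd_pow_pow_sub_expand (k : ℕ) (f : MvPolynomial σ ℤ) :
    C (p : ℤ) ∣ f ^ p ^ k - expand (p ^ k) f := by
  rw [C_dvd_iff_map_hom_eq_zero (Int.castRingHom (ZMod p)) _
    (fun _ ↦ ZMod.intCast_zmod_eq_zero_iff_dvd _ _), map_sub, map_pow, map_expand,
    expand_pow_zmod, sub_self]

theorem sq_dvd_coeff_smul_pow_pow_succ_sub_coeff_pow (k : ℕ) (f : MvPolynomial σ ℤ)
    (μ : σ →₀ ℕ) : (p : ℤ) ^ 2 ∣ coeff (p ^ k • μ) (f ^ p ^ (k + 1)) - coeff μ (f ^ p) := by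
  have h := dvd_sub_pow_of_dvd_sub (p := p)
    (by simpa using C_dvd_pow_pow_sub_expand p k f) 1
  have hC : C ((p : ℤ) ^ 2) ∣ f ^ p ^ (k + 1) - expand (p ^ k) (f ^ p) := by
    simpa [← pow_mul, pow_succ] using h
  have hμ := (C_dvd_iff_dvd_coeff _ _).1 hC (p ^ k • μ)
  rwa [coeff_sub, coeff_expand_smul _ (pow_ne_zero _ (Fact.out (p := p.Prime)).ne_zero)] at hμ

end Frobenius

variable {R : Type*} [CommRing R]

theorem coeff_single_eq_constantCoeff_pderiv (i : σ) (φ : MvPolynomial σ R) :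
    coeff (single i 1) φ = constantCoeff (pderiv i φ) := by
  simp [constantCoeff_eq, coeff_pderiv]

theorem coeff_single_add_single_eq_constantCoeff_pderiv_pderiv [DecidableEq σ] {i j : σ}
    (hij : i ≠ j) (φ : MvPolynomial σ R) :
    coeff (single i 1 + single j 1) φ = constantCoeff (pderiv i (pderiv j φ)) := by
  simp [constantCoeff_eq, coeff_pderiv, hij]

theorem coeff_single_add_single_pow [DecidableEq σ] {i j : σ} (hij : i ≠ j)
    (φ : MvPolynomial σ R) (N : ℕ) :
    coeff (single i 1 + single j 1) (φ ^ N) =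
      N * coeff 0 φ ^ (N - 1) * coeff (single i 1 + single j 1) φ +
        N * (N - 1 : ℕ) * coeff 0 φ ^ (N - 1 - 1) * coeff (single i 1) φ *
          coeff (single j 1) φ := by
  rw [show coeff 0 φ = constantCoeff φ from rfl]
  simp only [coeff_single_add_single_eq_constantCoeff_pderiv_pderiv hij,
    coeff_single_eq_constantCoeff_pderiv, Derivation.leibniz_pow, map_nsmul, Derivation.leibniz,
    smul_eq_mul]
  simp only [map_add, map_mul, map_pow, map_natCast, nsmul_eq_mul]
  ring

end MvPolynomial

open MvPolynomial in
theorem stmt_11_general (n m : ℕ) (hn : 2 ≤ n)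
    (f : MvPolynomial (Fin m) ℤ) (i j : Fin m) (hij : i < j)
    (hodd : Odd (MvPolynomial.coeff 0 f)) :
    Even (MvPolynomial.coeff (Finsupp.single i 1 + Finsupp.single j 1) (f ^ 2 ^ n) / 2 ^ n +
      MvPolynomial.coeff
        (Finsupp.single i (2 ^ (n - 1)) + Finsupp.single j (2 ^ (n - 1))) (f ^ 2 ^ n) / 2) := by
  obtain ⟨k, rfl⟩ : ∃ k, n = k + 1 := ⟨n - 1, by omega⟩
  set c := coeff 0 f
  set a := coeff (single i 1) f
  set b := coeff (single j 1) f
  set d := coeff (single i 1 + single j 1) f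
  set N := 2 ^ (k + 1)
  have hT : coeff (single i 1 + single j 1) (f ^ N) =
      2 ^ (k + 1) * (c ^ (N - 1) * d + (N - 1 : ℕ) * c ^ (N - 1 - 1) * a * b) := by
    rw [coeff_single_add_single_pow hij.ne]
    push_cast [N]
    ring
  obtain ⟨u, hu⟩ := sq_dvd_coeff_smul_pow_pow_succ_sub_coeff_pow 2 k f (single i 1 + single j 1)
  rw [coeff_single_add_single_pow hij.ne, smul_add, smul_single, smul_single, smul_eq_mul,
    mul_one] at hu
  have hW : coeff (single i (2 ^ k) + single j (2 ^ k)) (f ^ N) =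
      2 * (c * d + a * b + 2 * u) := by
    norm_num at hu
    linarith
  rw [Nat.add_sub_cancel, hT, hW, Int.mul_ediv_cancel_left _ (by positivity),
    Int.mul_ediv_cancel_left _ two_ne_zero]
  have hN : Odd (N - 1) := Nat.Even.sub_odd Nat.one_le_two_pow (by simp [N, parity_simps]) odd_one
  simp [parity_simps, Int.not_even_iff_odd.mpr hodd, Nat.not_even_iff_odd.mpr hN]

/-- If `f` has odd constant term, then the integer
`c_{f^{2^n}}(x_i x_j)/2^n + c_{f^{2^n}}(x_i^{2^{n-1}} x_j^{2^{n-1}})/2` is even. -/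
theorem stmt_11 (n m : ℕ) (hn : 2 ≤ n) (hm : 2 ≤ m)
    (f : MvPolynomial (Fin m) ℤ) (i j : Fin m) (hij : i < j)
    (hodd : Odd (MvPolynomial.coeff 0 f)) :
    Even (MvPolynomial.coeff (Finsupp.single i 1 + Finsupp.single j 1) (f ^ 2 ^ n) / 2 ^ n +
      MvPolynomial.coeff
        (Finsupp.single i (2 ^ (n - 1)) + Finsupp.single j (2 ^ (n - 1))) (f ^ 2 ^ n) / 2) :=
  stmt_11_general n m hn f i j hij hodd
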